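/- arXiv:2305.17864 — 5 statements merged into one kernel-verified Lean document; each statement's English description precedes it below -/
import Mathlib

section
/- For real numbers a ≥ 1 and s ≥ a, the upper incomplete Gamma function satisfies Γ(a, s) ≤ a * s^(a-1) * e^(-s), where Γ(a,s) = ∫_s^∞ t^(a-1) e^(-t) dt. -/
open Real MeasureTheory

theorem upper_incomplete_gamma_bound (a s : ℝ) (ha : 1 ≤ a) (hs : a ≤ s) :
    ∫ t in Set.Ioi s, t ^ (a - 1) * Real.exp (-t) ≤ a * s ^ (a - 1) * Real.exp (-s) := by
  have ha0 : (0:ℝ) < a := lt_of_lt_of_le zero_lt_one ha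
  have hs0 : (0:ℝ) < s := lt_of_lt_of_le ha0 hs
  -- pointwise bound
  have key : ∀ t ∈ Set.Ioi s, t ^ (a - 1) * Real.exp (-t)
      ≤ (s ^ (a - 1) * Real.exp (-s)) * Real.exp (-((t - s) / a)) := by
    intro t ht
    have hts : s < t := ht
    have ht0 : 0 < t := hs0.trans hts
    have h1 : t ^ (a - 1) = s ^ (a - 1) * Real.exp ((a - 1) * Real.log (t / s)) := by
      have he : (t / s) ^ (a - 1) = Real.exp ((a - 1) * Real.log (t / s)) := by
        rw [Real.rpow_def_of_pos (div_pos ht0 hs0), mul_comm]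
      rw [← he, Real.div_rpow ht0.le hs0.le]
      field_simp
    have hlog : Real.log (t / s) ≤ (t - s) / a := by
      have h2 : Real.log (t / s) ≤ t / s - 1 := by
        have := Real.log_le_sub_one_of_pos (div_pos ht0 hs0)
        linarith
      have h3 : t / s - 1 = (t - s) / s := by field_simp
      have h4 : (t - s) / s ≤ (t - s) / a :=
        div_le_div_of_nonneg_left (by linarith) ha0 hs
      linarith
    have h5 : (a - 1) * Real.log (t / s) ≤ (a - 1) * ((t - s) / a) :=
      mul_le_mul_of_nonneg_left hlog (by linarith)
    calc t ^ (a - 1) * Real.exp (-t)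
        = s ^ (a - 1) * Real.exp ((a - 1) * Real.log (t / s)) * Real.exp (-t) := by rw [h1]
      _ ≤ s ^ (a - 1) * Real.exp ((a - 1) * ((t - s) / a)) * Real.exp (-t) := by
          gcongr
      _ = (s ^ (a - 1) * Real.exp (-s)) * Real.exp (-((t - s) / a)) := by
          rw [mul_assoc, ← Real.exp_add, mul_assoc, ← Real.exp_add]
          congr 2
          field_simp
          ring
  -- integrability of the dominating function
  have hexp : IntegrableOn (fun t => Real.exp (-(a⁻¹ * t))) (Set.Ioi s) := by
    simpa [neg_mul] using exp_neg_integrableOn_Ioi s (inv_pos.mpr ha0)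
  have hdom : IntegrableOn
      (fun t => (s ^ (a - 1) * Real.exp (-s)) * Real.exp (-((t - s) / a))) (Set.Ioi s) := by
    have : (fun t => (s ^ (a - 1) * Real.exp (-s)) * Real.exp (-((t - s) / a)))
        = fun t => ((s ^ (a - 1) * Real.exp (-s)) * Real.exp (s / a)) * Real.exp (-(a⁻¹ * t)) := by
      funext t
      rw [show -((t - s) / a) = s / a + -(a⁻¹ * t) by field_simp; ring, Real.exp_add]
      ring
    rw [this]
    exact hexp.const_mul _
  -- integrability of the integrand
  have hmeas : AEStronglyMeasurable (fun t => t ^ (a - 1) * Real.exp (-t))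
      (volume.restrict (Set.Ioi s)) := by
    apply Measurable.aestronglyMeasurable
    fun_prop
  have hint : IntegrableOn (fun t => t ^ (a - 1) * Real.exp (-t)) (Set.Ioi s) := by
    apply hdom.mono' hmeas
    filter_upwards [ae_restrict_mem measurableSet_Ioi] with t ht
    have ht0 : 0 < t := hs0.trans ht
    rw [Real.norm_eq_abs, abs_of_nonneg (by positivity)]
    exact key t ht
  -- compare integrals
  have hle : ∫ t in Set.Ioi s, t ^ (a - 1) * Real.exp (-t)
      ≤ ∫ t in Set.Ioi s, (s ^ (a - 1) * Real.exp (-s)) * Real.exp (-((t - s) / a)) :=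
    setIntegral_mono_on hint hdom measurableSet_Ioi key
  refine hle.trans_eq ?_
  -- compute the integral
  have hcalc : ∫ t in Set.Ioi s, Real.exp (-((t - s) / a)) = a := by
    have h1 : (fun t => Real.exp (-((t - s) / a)))
        = fun t => Real.exp (s / a) * Real.exp (-(a⁻¹ * t)) := by
      funext t
      rw [show -((t - s) / a) = s / a + -(a⁻¹ * t) by field_simp; ring, Real.exp_add]
    rw [h1, MeasureTheory.integral_const_mul]
    have h2 : ∫ t in Set.Ioi s, Real.exp (-(a⁻¹ * t))
        = a⁻¹⁻¹ • ∫ x in Set.Ioi (a⁻¹ * s), Real.exp (-x) :=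
      MeasureTheory.integral_comp_mul_left_Ioi (fun x => Real.exp (-x)) s (inv_pos.mpr ha0)
    rw [h2, integral_exp_neg_Ioi, inv_inv, smul_eq_mul]
    calc Real.exp (s / a) * (a * Real.exp (-(a⁻¹ * s)))
        = a * (Real.exp (s / a) * Real.exp (-(s / a))) := by rw [inv_mul_eq_div]; ring
      _ = a := by rw [← Real.exp_add]; simp
  rw [MeasureTheory.integral_const_mul, hcalc]
  ring
end

section
/- For all real s ≥ 15/2, the quantity |(√2 s^2 e^s/(3π)) ∫_1^∞ (2u^(3/2) - (3/2)u^(5/2) + (3/16)u^(7/2) + (1/64)u^(9/2) + (3/1024)u^(11/2) + (3/4096)u^(13/2)) e^{-su} du| ≤ 30595 s / (4096 √2 π). -/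
/-!
Bound the polynomial termwise by the absolute values of its coefficients. Each tail
`∫_1^∞ u^p e^(-su) du` is at most `(p + 1) e^(-s) / s` once `p + 1 ≤ s`, since `u^p ≤ e^(p(u-1))`
turns it into an explicit exponential integral. The weighted sum of the `p + 1` is
`91785/8192`, and `√2/3 · 91785/8192 = 30595/(4096 √2)`.
-/

open Real MeasureTheory

lemma rpow_le_exp_mul_sub_one {u p : ℝ} (hu : 0 < u) (hp : 0 ≤ p) :
    u ^ p ≤ exp (p * (u - 1)) := by
  rw [rpow_def_of_pos hu, mul_comm p]
  exact exp_le_exp.2 (mul_le_mul_of_nonneg_right (log_le_sub_one_of_pos hu) hp)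

lemma integrableOn_rpow_mul_exp_neg_mul_Ioi_one {p s : ℝ} (hp : -1 < p) (hs : 0 < s) :
    IntegrableOn (fun u : ℝ => u ^ p * exp (-(s * u))) (Set.Ioi 1) := by
  have h := integrableOn_rpow_mul_exp_neg_mul_rpow hp zero_lt_one hs
  simp only [rpow_one, neg_mul] at h
  exact h.mono_set (Set.Ioi_subset_Ioi zero_le_one)

-- With `a = p + 1` this is `Γ(a, s) ≤ a s^(a-1) e^(-s)` for `s ≥ a ≥ 1`, after `u ↦ u / s`.
lemma setIntegral_rpow_mul_exp_neg_mul_Ioi_one_le {p s : ℝ} (hp : 0 ≤ p) (hps : p + 1 ≤ s) :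
    ∫ u in Set.Ioi 1, u ^ p * exp (-(s * u)) ≤ (p + 1) * (exp (-s) / s) := by
  have hs : 0 < s := by linarith
  have hsp : 0 < s - p := by linarith
  have hdom : ∀ u ∈ Set.Ioi (1 : ℝ),
      u ^ p * exp (-(s * u)) ≤ exp (-p) * exp (-(s - p) * u) := by
    intro u hu
    calc u ^ p * exp (-(s * u)) ≤ exp (p * (u - 1)) * exp (-(s * u)) := by
          gcongr
          exact rpow_le_exp_mul_sub_one (zero_lt_one.trans hu) hp
      _ = exp (-p) * exp (-(s - p) * u) := by rw [← exp_add, ← exp_add]; ring_nf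
  calc ∫ u in Set.Ioi 1, u ^ p * exp (-(s * u))
      ≤ ∫ u in Set.Ioi 1, exp (-p) * exp (-(s - p) * u) :=
        setIntegral_mono_on (integrableOn_rpow_mul_exp_neg_mul_Ioi_one (by linarith) hs)
          ((integrableOn_exp_mul_Ioi (by linarith) 1).const_mul _) measurableSet_Ioi hdom
    _ = exp (-s) / (s - p) := by
        rw [integral_const_mul, integral_exp_mul_Ioi (by linarith), mul_one, neg_div_neg_eq,
          ← mul_div_assoc, ← exp_add]
        ring_nf
    _ ≤ (p + 1) * (exp (-s) / s) := by
        rw [← mul_div_assoc, div_le_div_iff₀ hsp hs]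
        have : s ≤ (p + 1) * (s - p) := by nlinarith
        nlinarith [exp_pos (-s)]

lemma abs_setIntegral_sum_rpow_mul_exp_neg_mul_le {ι : Type*} (t : Finset ι) (c p : ι → ℝ)
    {s : ℝ} (hp : ∀ i ∈ t, 0 ≤ p i) (hps : ∀ i ∈ t, p i + 1 ≤ s) :
    |∫ u in Set.Ioi 1, (∑ i ∈ t, c i * u ^ p i) * exp (-(s * u))|
      ≤ (∑ i ∈ t, |c i| * (p i + 1)) * (exp (-s) / s) := by
  have hint : ∀ i ∈ t, IntegrableOn (fun u : ℝ => u ^ p i * exp (-(s * u))) (Set.Ioi 1) :=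
    fun i hi => integrableOn_rpow_mul_exp_neg_mul_Ioi_one (by linarith [hp i hi])
      (by linarith [hp i hi, hps i hi])
  simp_rw [Finset.sum_mul, mul_assoc]
  rw [integral_finsetSum t fun i hi => (hint i hi).const_mul (c i)]
  refine (Finset.abs_sum_le_sum_abs _ _).trans (Finset.sum_le_sum fun i hi => ?_)
  rw [integral_const_mul, abs_mul, abs_of_nonneg (setIntegral_nonneg measurableSet_Ioi
    fun u hu => mul_nonneg (rpow_nonneg (zero_le_one.trans hu.le) _) (exp_pos _).le)]
  exact mul_le_mul_of_nonneg_left (setIntegral_rpow_mul_exp_neg_mul_Ioi_one_le (hp i hi)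
    (hps i hi)) (abs_nonneg _)

theorem gamma_tail_integral_bound (s : ℝ) (hs : 15/2 ≤ s) :
    |Real.sqrt 2 * s^2 * Real.exp s / (3 * π) *
      ∫ u in Set.Ioi (1:ℝ),
        (2 * u ^ ((3:ℝ)/2) - (3/2) * u ^ ((5:ℝ)/2) + (3/16) * u ^ ((7:ℝ)/2)
          + (1/64) * u ^ ((9:ℝ)/2) + (3/1024) * u ^ ((11:ℝ)/2)
          + (3/4096) * u ^ ((13:ℝ)/2)) * Real.exp (-(s * u))|
    ≤ 30595 * s / (4096 * Real.sqrt 2 * π) := by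
  set c : Fin 6 → ℝ := ![2, -3/2, 3/16, 1/64, 3/1024, 3/4096]
  set p : Fin 6 → ℝ := ![3/2, 5/2, 7/2, 9/2, 11/2, 13/2]
  have hpoly : ∀ u : ℝ, 2 * u ^ ((3:ℝ)/2) - (3/2) * u ^ ((5:ℝ)/2) + (3/16) * u ^ ((7:ℝ)/2)
      + (1/64) * u ^ ((9:ℝ)/2) + (3/1024) * u ^ ((11:ℝ)/2) + (3/4096) * u ^ ((13:ℝ)/2)
      = ∑ i, c i * u ^ p i := by
    intro u
    simp only [c, p, Fin.sum_univ_six, Matrix.cons_val_zero, Matrix.cons_val_one, Matrix.cons_val]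
    ring
  have hcoeff : ∑ i, |c i| * (p i + 1) = 91785 / 8192 := by
    simp only [c, p, Fin.sum_univ_six, Matrix.cons_val_zero, Matrix.cons_val_one, Matrix.cons_val]
    norm_num
  have hbound := abs_setIntegral_sum_rpow_mul_exp_neg_mul_le Finset.univ c p
    (s := s) (fun i _ => by fin_cases i <;> norm_num [p])
    (fun i _ => by fin_cases i <;> norm_num [p] <;> linarith)
  simp_rw [hpoly, abs_mul, abs_of_nonneg (by positivity : 0 ≤ √2 * s ^ 2 * exp s / (3 * π))]
  calc _ ≤ √2 * s ^ 2 * exp s / (3 * π) * ((91785 / 8192) * (exp (-s) / s)) := by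
        rw [hcoeff] at hbound
        exact mul_le_mul_of_nonneg_left hbound (by positivity)
    _ = 30595 * s / (4096 * √2 * π) := by
        have hs0 : s ≠ 0 := by positivity
        rw [exp_neg]
        field_simp
        rw [sq_sqrt zero_le_two]
        ring
end

section
/- Let I_2(s) = (s^2/(3π)) ∫_{-1}^{1} (1-t^2)^(3/2) e^{st} dt and B_I(s) = 1 - 15/(8s) + 105/(128 s^2) + 315/(1024 s^3) + 10395/(32768 s^4) + 135135/(262144 s^5). Then for all real s ≥ 28, (e^s/√(2πs)) (B_I(s) - 27/s^6) ≤ I_2(s) ≤ (e^s/√(2πs)) (B_I(s) + 27/s^6). -/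
set_option maxHeartbeats 1000000

open Real MeasureTheory intervalIntegral

open Set





lemma lemA {x y : ℝ} (hy : 0 ≤ y) (hxy : y^2 = 1 - x) :
    1 - (3/2)*x + (3/8)*x^2 + (1/16)*x^3 + (3/128)*x^4 + (3/256)*x^5 ≤ y^3 ∧
    y^3 ≤ 1 - (3/2)*x + (3/8)*x^2 + (1/16)*x^3 + (3/128)*x^4 + (3/256)*x^5 + (7/256)*x^6 := by
  have hx : x = 1 - y^2 := by linarith
  subst hx
  constructor
  · nlinarith [sq_nonneg ((1-y)^3), mul_nonneg (sq_nonneg ((1-y)^3)) hy,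
      mul_nonneg (sq_nonneg ((1-y)^3)) (pow_nonneg hy 2),
      mul_nonneg (sq_nonneg ((1-y)^3)) (pow_nonneg hy 3),
      mul_nonneg (sq_nonneg ((1-y)^3)) (pow_nonneg hy 4)]
  · nlinarith [mul_nonneg (sq_nonneg ((1-y)^3)) (pow_nonneg hy 2),
      mul_nonneg (sq_nonneg ((1-y)^3)) (pow_nonneg hy 3),
      mul_nonneg (sq_nonneg ((1-y)^3)) (pow_nonneg hy 4),
      mul_nonneg (sq_nonneg ((1-y)^3)) (pow_nonneg hy 5),
      mul_nonneg (sq_nonneg ((1-y)^3)) (pow_nonneg hy 6)]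

lemma self_le_exp_half {u : ℝ} (hu : 0 ≤ u) : u ≤ Real.exp (u/2) := by
  have h1 : u/4 + 1 ≤ Real.exp (u/4) := by linarith [Real.add_one_le_exp (u/4)]
  have h2 : Real.exp (u/4) * Real.exp (u/4) = Real.exp (u/2) := by
    rw [← Real.exp_add]; ring_nf
  nlinarith [sq_nonneg (u/4 - 1), Real.exp_pos (u/4)]

lemma pow20_le_exp {x : ℝ} (hx : 0 ≤ x) : x^20 / 2432902008176640000 ≤ Real.exp x := by
  have h := Real.sum_le_exp_of_nonneg hx 21
  have h20 : x^20 / (Nat.factorial 20 : ℝ) ≤ ∑ i ∈ Finset.range 21, x ^ i / (Nat.factorial i : ℝ) := by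
    refine Finset.single_le_sum (f := fun i => x ^ i / (Nat.factorial i : ℝ)) ?_ (by norm_num)
    intro i _
    positivity
  have : ((Nat.factorial 20 : ℕ) : ℝ) = 2432902008176640000 := by norm_num [Nat.factorial]
  rw [← this]
  linarith

lemma sqrt_pi_ge : (17:ℝ)/10 ≤ Real.sqrt π := by
  rw [Real.le_sqrt (by norm_num) Real.pi_pos.le]
  nlinarith [Real.pi_gt_three]

-- value of the Gamma-type integral
lemma Ival (s p : ℝ) (hs : 0 < s) (hp : 0 < p) :
    ∫ u in Ioi (0:ℝ), u ^ (p - 1) * Real.exp (-(s*u)) = Real.Gamma p / s ^ p := by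
  rw [Real.integral_rpow_mul_exp_neg_mul_Ioi hp hs, Real.div_rpow (by norm_num) hs.le,
    Real.one_rpow, one_div, inv_mul_eq_div]

-- integrability
lemma intOn (s q : ℝ) (hs : 0 < s) (hq : -1 < q) :
    IntegrableOn (fun u : ℝ => u ^ q * Real.exp (-(s*u))) (Ioi 0) := by
  have h0 : (0:ℝ) < q + 1 := by linarith
  have h := Real.GammaIntegral_convergent h0
  simp only [add_sub_cancel_right] at h
  have h2 : IntegrableOn (fun x : ℝ => Real.exp (-(s*x)) * (s*x) ^ q) (Ioi 0) := by
    have := (integrableOn_Ioi_comp_mul_left_iff (fun x : ℝ => Real.exp (-x) * x ^ q) 0 hs).mpr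
    simpa using this (by simpa using h)
  have h3 := h2.const_mul ((s ^ q)⁻¹)
  refine IntegrableOn.congr_fun h3 (fun x hx => ?_) measurableSet_Ioi
  have hx0 : (0:ℝ) < x := hx
  rw [Real.mul_rpow hs.le hx0.le]
  field_simp [(Real.rpow_pos_of_pos hs q).ne']


lemma tail_pt (s q u : ℝ) (hs : 28 ≤ s) (hq0 : 0 ≤ q) (hq8 : q ≤ 8) (hu : 2 ≤ u) :
    u ^ q * Real.exp (-(s*u)) ≤ Real.exp (-(3*s/4*u)) := by
  have hu1 : (1:ℝ) ≤ u := by linarith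
  have h1 : u ^ q ≤ u ^ (8:ℝ) := Real.rpow_le_rpow_of_exponent_le hu1 hq8
  have h2 : u ^ (8:ℝ) = u^(8:ℕ) := by
    rw [show ((8:ℝ)) = ((8:ℕ):ℝ) by norm_num, Real.rpow_natCast]
  have h3 : u^(8:ℕ) ≤ (Real.exp (u/2))^(8:ℕ) :=
    pow_le_pow_left₀ (by linarith) (self_le_exp_half (by linarith)) 8
  have h4 : (Real.exp (u/2))^(8:ℕ) = Real.exp (4*u) := by
    rw [← Real.exp_nat_mul]; ring_nf
  have h5 : u ^ q ≤ Real.exp (4*u) := by rw [← h4]; rw [h2] at h1; linarith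
  calc u ^ q * Real.exp (-(s*u)) ≤ Real.exp (4*u) * Real.exp (-(s*u)) := by
        exact mul_le_mul_of_nonneg_right h5 (Real.exp_pos _).le
    _ = Real.exp (4*u - s*u) := by rw [← Real.exp_add]; ring_nf
    _ ≤ Real.exp (-(3*s/4*u)) := by
        apply Real.exp_le_exp.mpr; nlinarith

lemma tail_int (s : ℝ) (hs : 0 < s) :
    ∫ u in Ioi (2:ℝ), Real.exp (-(3*s/4*u)) = 4/(3*s) * Real.exp (-(3*s/2)) := by
  have hb : 0 < 3*s/4 := by linarith
  have h := integral_comp_mul_left_Ioi (fun x => Real.exp (-x)) 2 hb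
  simp only [smul_eq_mul] at h
  rw [h, integral_exp_neg_Ioi]
  rw [show 3*s/4*2 = 3*s/2 by ring]
  field_simp

lemma KT (s : ℝ) (hs : 28 ≤ s) : (Real.sqrt s)^15 * Real.exp (-(3*s/2)) ≤ 7 := by
  have hs0 : (0:ℝ) ≤ s := by linarith
  have hT : ((Real.sqrt s)^15)^2 = s^15 := by
    rw [← pow_mul, show 15*2 = 2*15 by ring, pow_mul, Real.sq_sqrt hs0]
  have hE : (Real.exp (-(3*s/2)))^2 = Real.exp (-(3*s)) := by
    rw [← Real.exp_nat_mul]; ring_nf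
  have h3 := pow20_le_exp (show (0:ℝ) ≤ 3*s by linarith)
  have h2 : Real.exp (3*s) * Real.exp (-(3*s)) = 1 := by rw [← Real.exp_add]; simp
  have hs5 : (28:ℝ)^5 ≤ s^5 := by
    apply pow_le_pow_left₀ (by norm_num) hs
  have hEpos : 0 < Real.exp (-(3*s)) := Real.exp_pos _
  have key : s^15 * Real.exp (-(3*s)) ≤ 49 := by
    have hgt : 0 < (3*s)^20 / 2432902008176640000 := by positivity
    have hinv : Real.exp (-(3*s)) ≤ 2432902008176640000 / (3*s)^20 := by
      rw [le_div_iff₀ (by positivity)]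
      nlinarith [hEpos]
    calc s^15 * Real.exp (-(3*s)) ≤ s^15 * (2432902008176640000 / (3*s)^20) := by
          apply mul_le_mul_of_nonneg_left hinv (by positivity)
      _ = 2432902008176640000 / (3^20 * s^5) := by
          rw [mul_pow]; field_simp
      _ ≤ 49 := by
          rw [div_le_iff₀ (by positivity)]
          nlinarith
  nlinarith [mul_nonneg (pow_nonneg (Real.sqrt_nonneg s) 15) (Real.exp_pos (-(3*s/2))).le,
    hT, hE, sq_nonneg ((Real.sqrt s)^15 * Real.exp (-(3*s/2)))]

lemma Gam32 : Real.Gamma (3/2) = 1/2 * Real.sqrt π := by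
  rw [show (3:ℝ)/2 = 1/2 + 1 by norm_num, Real.Gamma_add_one (by norm_num),
    Real.Gamma_one_half_eq]
lemma Gam52 : Real.Gamma (5/2) = 3/4 * Real.sqrt π := by
  rw [show (5:ℝ)/2 = 3/2 + 1 by norm_num, Real.Gamma_add_one (by norm_num), Gam32]; ring
lemma Gam72 : Real.Gamma (7/2) = 15/8 * Real.sqrt π := by
  rw [show (7:ℝ)/2 = 5/2 + 1 by norm_num, Real.Gamma_add_one (by norm_num), Gam52]; ring
lemma Gam92 : Real.Gamma (9/2) = 105/16 * Real.sqrt π := by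
  rw [show (9:ℝ)/2 = 7/2 + 1 by norm_num, Real.Gamma_add_one (by norm_num), Gam72]; ring
lemma Gam112 : Real.Gamma (11/2) = 945/32 * Real.sqrt π := by
  rw [show (11:ℝ)/2 = 9/2 + 1 by norm_num, Real.Gamma_add_one (by norm_num), Gam92]; ring
lemma Gam132 : Real.Gamma (13/2) = 10395/64 * Real.sqrt π := by
  rw [show (13:ℝ)/2 = 11/2 + 1 by norm_num, Real.Gamma_add_one (by norm_num), Gam112]; ring
lemma Gam152 : Real.Gamma (15/2) = 135135/128 * Real.sqrt π := by
  rw [show (15:ℝ)/2 = 13/2 + 1 by norm_num, Real.Gamma_add_one (by norm_num), Gam132]; ring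
lemma Gam172 : Real.Gamma (17/2) = 2027025/256 * Real.sqrt π := by
  rw [show (17:ℝ)/2 = 15/2 + 1 by norm_num, Real.Gamma_add_one (by norm_num), Gam152]; ring

lemma final_lower (s t A E WL : ℝ) (hts : t^2 = s) (ht0 : 0 < t)
    (hA : 17/10 ≤ A) (hA2 : A^2 = π) (hE0 : 0 ≤ E) (hKT : t^15 * E ≤ 7)
    (hsqrt : Real.sqrt (2*π*s) = Real.sqrt 2 * A * t)
    (h2 : Real.sqrt 2 * Real.sqrt 2 = 2)
    (hWL : A * (3/4/t^5 - 45/32/t^7 + 315/512/t^9 + 945/4096/t^11 + 31185/131072/t^13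
        + 405405/1048576/t^15) - 9039/8192 * (4/(3*s) * E) ≤ WL) :
    Real.exp s / Real.sqrt (2*π*s) *
      ((1 - 15/(8*s) + 105/(128*s^2) + 315/(1024*s^3) + 10395/(32768*s^4)
          + 135135/(262144*s^5)) - 27/s^6)
      ≤ s^2/(3*π) * (Real.exp s * (2*Real.sqrt 2) * WL) := by
  subst hts
  rw [hsqrt, ← hA2]
  have hA0 : 0 < A := lt_of_lt_of_le (by norm_num) hA
  set LB : ℝ := A * (3/4/t^5 - 45/32/t^7 + 315/512/t^9 + 945/4096/t^11 + 31185/131072/t^13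
        + 405405/1048576/t^15) - 9039/8192 * (4/(3*t^2) * E) with hLB
  have hexp := Real.exp_pos (t^2)
  have hs2 : (0:ℝ) ≤ Real.sqrt 2 := Real.sqrt_nonneg 2
  have hgoal2 : (t^2)^2/(3*A^2) * (Real.exp (t^2) * (2*Real.sqrt 2) * LB)
      ≤ (t^2)^2/(3*A^2) * (Real.exp (t^2) * (2*Real.sqrt 2) * WL) := by
    have hc : (0:ℝ) ≤ (t^2)^2/(3*A^2) * (Real.exp (t^2) * (2*Real.sqrt 2)) := by positivity
    calc (t^2)^2/(3*A^2) * (Real.exp (t^2) * (2*Real.sqrt 2) * LB)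
        = ((t^2)^2/(3*A^2) * (Real.exp (t^2) * (2*Real.sqrt 2))) * LB := by ring
      _ ≤ ((t^2)^2/(3*A^2) * (Real.exp (t^2) * (2*Real.sqrt 2))) * WL :=
          mul_le_mul_of_nonneg_left hWL hc
      _ = (t^2)^2/(3*A^2) * (Real.exp (t^2) * (2*Real.sqrt 2) * WL) := by ring
  refine le_trans ?_ hgoal2
  rw [div_mul_eq_mul_div, div_le_iff₀ (by positivity : (0:ℝ) < Real.sqrt 2 * A * t)]
  have hh : ((1 - 15/(8*t^2) + 105/(128*(t^2)^2) + 315/(1024*(t^2)^3) + 10395/(32768*(t^2)^4)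
          + 135135/(262144*(t^2)^5)) - 27/(t^2)^6) ≤ (4*t^5*A/(3*A^2))*LB := by
    have htne : t ≠ 0 := ht0.ne'
    have hAne : A ≠ 0 := hA0.ne'
    have hQB : (4:ℝ)/3*t^5*(3/4/t^5 - 45/32/t^7 + 315/512/t^9 + 945/4096/t^11
        + 31185/131072/t^13 + 405405/1048576/t^15)
        = 1 - 15/(8*t^2) + 105/(128*(t^2)^2) + 315/(1024*(t^2)^3) + 10395/(32768*(t^2)^4)
          + 135135/(262144*(t^2)^5) := by
      field_simp
      ring
    have hsplit : (4*t^5*A/(3*A^2))*LB = 4/3*t^5*(3/4/t^5 - 45/32/t^7 + 315/512/t^9 + 945/4096/t^11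
        + 31185/131072/t^13 + 405405/1048576/t^15) - (9039/4608)*(t^3*E)/A := by
      rw [hLB]
      field_simp
      ring
    have htail : (9039:ℝ)/4608*(t^3*E)/A ≤ 27/(t^2)^6 := by
      rw [div_le_div_iff₀ hA0 (by positivity)]
      have hre : (9039:ℝ)/4608*(t^3*E)*(t^2)^6 = 9039/4608*(t^15*E) := by ring
      rw [hre]
      linarith
    rw [hsplit, ← hQB]
    ring_nf at htail ⊢
    linarith
  calc Real.exp (t^2) * ((1 - 15/(8*t^2) + 105/(128*(t^2)^2) + 315/(1024*(t^2)^3)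
          + 10395/(32768*(t^2)^4) + 135135/(262144*(t^2)^5)) - 27/(t^2)^6)
      ≤ Real.exp (t^2) * ((4*t^5*A/(3*A^2))*LB) := mul_le_mul_of_nonneg_left hh hexp.le
    _ = (t^2)^2/(3*A^2) * (Real.exp (t^2) * (2*Real.sqrt 2) * LB) * (Real.sqrt 2 * A * t) := by
        linear_combination (-(Real.exp (t^2) * LB * t^5 * (2*A/(3*A^2)))) * h2

lemma final_upper (s t A E WU : ℝ) (hts : t^2 = s) (ht0 : 0 < t)
    (hA : 17/10 ≤ A) (hA2 : A^2 = π) (hE0 : 0 ≤ E) (hKT : t^15 * E ≤ 7)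
    (hsqrt : Real.sqrt (2*π*s) = Real.sqrt 2 * A * t)
    (h2 : Real.sqrt 2 * Real.sqrt 2 = 2)
    (hWU : WU ≤ A * (3/4/t^5 - 45/32/t^7 + 315/512/t^9 + 945/4096/t^11 + 31185/131072/t^13
        + 405405/1048576/t^15 + 14189175/4194304/t^17) + 3/4 * (4/(3*s) * E)) :
    s^2/(3*π) * (Real.exp s * (2*Real.sqrt 2) * WU)
      ≤ Real.exp s / Real.sqrt (2*π*s) *
      ((1 - 15/(8*s) + 105/(128*s^2) + 315/(1024*s^3) + 10395/(32768*s^4)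
          + 135135/(262144*s^5)) + 27/s^6) := by
  subst hts
  rw [hsqrt, ← hA2]
  have hA0 : 0 < A := lt_of_lt_of_le (by norm_num) hA
  set UB : ℝ := A * (3/4/t^5 - 45/32/t^7 + 315/512/t^9 + 945/4096/t^11 + 31185/131072/t^13
        + 405405/1048576/t^15 + 14189175/4194304/t^17) + 3/4 * (4/(3*t^2) * E) with hUB
  have hexp := Real.exp_pos (t^2)
  have hs2 : (0:ℝ) ≤ Real.sqrt 2 := Real.sqrt_nonneg 2
  have hgoal2 : (t^2)^2/(3*A^2) * (Real.exp (t^2) * (2*Real.sqrt 2) * WU)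
      ≤ (t^2)^2/(3*A^2) * (Real.exp (t^2) * (2*Real.sqrt 2) * UB) := by
    have hc : (0:ℝ) ≤ (t^2)^2/(3*A^2) * (Real.exp (t^2) * (2*Real.sqrt 2)) := by positivity
    calc (t^2)^2/(3*A^2) * (Real.exp (t^2) * (2*Real.sqrt 2) * WU)
        = ((t^2)^2/(3*A^2) * (Real.exp (t^2) * (2*Real.sqrt 2))) * WU := by ring
      _ ≤ ((t^2)^2/(3*A^2) * (Real.exp (t^2) * (2*Real.sqrt 2))) * UB :=
          mul_le_mul_of_nonneg_left hWU hc
      _ = (t^2)^2/(3*A^2) * (Real.exp (t^2) * (2*Real.sqrt 2) * UB) := by ring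
  refine le_trans hgoal2 ?_
  conv_rhs => rw [div_mul_eq_mul_div]
  rw [le_div_iff₀ (by positivity : (0:ℝ) < Real.sqrt 2 * A * t)]
  have hh : (4*t^5*A/(3*A^2))*UB ≤ ((1 - 15/(8*t^2) + 105/(128*(t^2)^2) + 315/(1024*(t^2)^3)
      + 10395/(32768*(t^2)^4) + 135135/(262144*(t^2)^5)) + 27/(t^2)^6) := by
    have htne : t ≠ 0 := ht0.ne'
    have hAne : A ≠ 0 := hA0.ne'
    have hQB : (4:ℝ)/3*t^5*(3/4/t^5 - 45/32/t^7 + 315/512/t^9 + 945/4096/t^11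
        + 31185/131072/t^13 + 405405/1048576/t^15)
        = 1 - 15/(8*t^2) + 105/(128*(t^2)^2) + 315/(1024*(t^2)^3) + 10395/(32768*(t^2)^4)
          + 135135/(262144*(t^2)^5) := by
      field_simp
      ring
    have hsplit : (4*t^5*A/(3*A^2))*UB = 4/3*t^5*(3/4/t^5 - 45/32/t^7 + 315/512/t^9
        + 945/4096/t^11 + 31185/131072/t^13 + 405405/1048576/t^15)
        + (4729725/1048576)/(t^2)^6 + (4/3)*(t^3*E)/A := by
      rw [hUB]
      field_simp
      ring
    have htail : (4:ℝ)/3*(t^3*E)/A ≤ (23581827/1048576)/(t^2)^6 := by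
      rw [div_le_div_iff₀ hA0 (by positivity)]
      have hre : (4:ℝ)/3*(t^3*E)*(t^2)^6 = 4/3*(t^15*E) := by ring
      rw [hre]
      nlinarith [hKT, hA]
    rw [hsplit, ← hQB]
    ring_nf at htail ⊢
    linarith
  calc (t^2)^2/(3*A^2) * (Real.exp (t^2) * (2*Real.sqrt 2) * UB) * (Real.sqrt 2 * A * t)
      = Real.exp (t^2) * ((4*t^5*A/(3*A^2))*UB) := by
        linear_combination (Real.exp (t^2) * UB * t^5 * (2*A/(3*A^2))) * h2
    _ ≤ Real.exp (t^2) * ((1 - 15/(8*t^2) + 105/(128*(t^2)^2) + 315/(1024*(t^2)^3)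
          + 10395/(32768*(t^2)^4) + 135135/(262144*(t^2)^5)) + 27/(t^2)^6) :=
        mul_le_mul_of_nonneg_left hh hexp.le

noncomputable def comboL (s u : ℝ) : ℝ :=
  1*(u^((3:ℝ)/2) * Real.exp (-(s*u))) + (-(3/4)*(u^((5:ℝ)/2) * Real.exp (-(s*u)))
  + (3/32*(u^((7:ℝ)/2) * Real.exp (-(s*u))) + (1/128*(u^((9:ℝ)/2) * Real.exp (-(s*u)))
  + (3/2048*(u^((11:ℝ)/2) * Real.exp (-(s*u))) + 3/8192*(u^((13:ℝ)/2) * Real.exp (-(s*u)))))))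

noncomputable def comboU (s u : ℝ) : ℝ :=
  comboL s u + 7/16384*(u^((15:ℝ)/2) * Real.exp (-(s*u)))

theorem bessel_I2_asymptotic_bounds (s : ℝ) (hs : 28 ≤ s) :
    Real.exp s / Real.sqrt (2 * π * s) *
      ((1 - 15/(8*s) + 105/(128*s^2) + 315/(1024*s^3) + 10395/(32768*s^4)
          + 135135/(262144*s^5)) - 27/s^6)
      ≤ s^2 / (3 * π) * ∫ t in (-1:ℝ)..1, (1 - t^2) ^ ((3:ℝ)/2) * Real.exp (s * t) ∧
    s^2 / (3 * π) * (∫ t in (-1:ℝ)..1, (1 - t^2) ^ ((3:ℝ)/2) * Real.exp (s * t))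
      ≤ Real.exp s / Real.sqrt (2 * π * s) *
          ((1 - 15/(8*s) + 105/(128*s^2) + 315/(1024*s^3) + 10395/(32768*s^4)
            + 135135/(262144*s^5)) + 27/s^6) := by
  have hs0 : (0:ℝ) < s := by linarith
  -- Step A : rewrite J as an Ioc integral
  have hJ1 : (∫ x in (-1:ℝ)..1, (1 - x^2) ^ ((3:ℝ)/2) * Real.exp (s * x))
      = ∫ x in (-1:ℝ)..1, (Real.sqrt (1 - x^2))^3 * Real.exp (s * x) := by
    apply intervalIntegral.integral_congr
    intro x hx
    rw [uIcc_of_le (by norm_num)] at hx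
    have h1 : 0 ≤ 1 - x^2 := by nlinarith [hx.1, hx.2]
    show (1 - x^2) ^ ((3:ℝ)/2) * Real.exp (s * x) = (Real.sqrt (1 - x^2))^3 * Real.exp (s * x)
    rw [Real.sqrt_eq_rpow, ← Real.rpow_natCast ((1-x^2) ^ ((1:ℝ)/2)) 3, ← Real.rpow_mul h1]
    norm_num
  have hsub := intervalIntegral.integral_comp_sub_left (a := 0) (b := 2)
      (fun x => (Real.sqrt (1 - x^2))^3 * Real.exp (s * x)) 1
  rw [show (1:ℝ)-2 = -1 by norm_num, show (1:ℝ)-0 = 1 by norm_num] at hsub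
  have hJ2 : (∫ x in (-1:ℝ)..1, (1 - x^2) ^ ((3:ℝ)/2) * Real.exp (s * x))
      = ∫ x in (0:ℝ)..2, (Real.sqrt (x*(2-x)))^3 * Real.exp (s * (1-x)) := by
    rw [hJ1, ← hsub]
    apply intervalIntegral.integral_congr
    intro x _
    have hx2 : 1 - (1-x)^2 = x*(2-x) := by ring
    simp only [hx2]
  have hJ3 : (∫ x in (-1:ℝ)..1, (1 - x^2) ^ ((3:ℝ)/2) * Real.exp (s * x))
      = ∫ x in Ioc (0:ℝ) 2, (Real.sqrt (x*(2-x)))^3 * Real.exp (s * (1-x)) := by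
    rw [hJ2, intervalIntegral.integral_of_le (by norm_num : (0:ℝ) ≤ 2)]
  -- Step B : integrability
  have i32 : IntegrableOn (fun u:ℝ => u^((3:ℝ)/2) * Real.exp (-(s*u))) (Ioi 0) :=
    intOn s _ hs0 (by norm_num)
  have i52 : IntegrableOn (fun u:ℝ => u^((5:ℝ)/2) * Real.exp (-(s*u))) (Ioi 0) :=
    intOn s _ hs0 (by norm_num)
  have i72 : IntegrableOn (fun u:ℝ => u^((7:ℝ)/2) * Real.exp (-(s*u))) (Ioi 0) :=
    intOn s _ hs0 (by norm_num)
  have i92 : IntegrableOn (fun u:ℝ => u^((9:ℝ)/2) * Real.exp (-(s*u))) (Ioi 0) :=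
    intOn s _ hs0 (by norm_num)
  have i112 : IntegrableOn (fun u:ℝ => u^((11:ℝ)/2) * Real.exp (-(s*u))) (Ioi 0) :=
    intOn s _ hs0 (by norm_num)
  have i132 : IntegrableOn (fun u:ℝ => u^((13:ℝ)/2) * Real.exp (-(s*u))) (Ioi 0) :=
    intOn s _ hs0 (by norm_num)
  have i152 : IntegrableOn (fun u:ℝ => u^((15:ℝ)/2) * Real.exp (-(s*u))) (Ioi 0) :=
    intOn s _ hs0 (by norm_num)
  have hLint : ∀ S : Set ℝ, S ⊆ Ioi 0 → IntegrableOn (comboL s) S := by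
    intro S hS
    unfold comboL
    exact ((i32.mono_set hS).const_mul _).add (((i52.mono_set hS).const_mul _).add
      (((i72.mono_set hS).const_mul _).add (((i92.mono_set hS).const_mul _).add
      (((i112.mono_set hS).const_mul _).add ((i132.mono_set hS).const_mul _)))))
  have hUint : ∀ S : Set ℝ, S ⊆ Ioi 0 → IntegrableOn (comboU s) S := by
    intro S hS
    unfold comboU
    exact (hLint S hS).add ((i152.mono_set hS).const_mul _)
  -- Step C : pointwise bounds on Ioc 0 2
  have hpt : ∀ u ∈ Ioc (0:ℝ) 2,
      (Real.exp s * (2*Real.sqrt 2) * comboL s u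
          ≤ (Real.sqrt (u*(2-u)))^3 * Real.exp (s * (1-u))
        ∧ (Real.sqrt (u*(2-u)))^3 * Real.exp (s * (1-u))
          ≤ Real.exp s * (2*Real.sqrt 2) * comboU s u) := by
    intro u hu
    obtain ⟨hup, hu2⟩ := hu
    have hu0' : (0:ℝ) ≤ u := hup.le
    have hy0 : 0 ≤ Real.sqrt (1 - u/2) := Real.sqrt_nonneg _
    have hy2 : (Real.sqrt (1 - u/2))^2 = 1 - u/2 := Real.sq_sqrt (by linarith)
    obtain ⟨hA1, hA2'⟩ := lemA (x := u/2) hy0 hy2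
    have hX0 : (0:ℝ) ≤ Real.exp s * (2*Real.sqrt 2) := by positivity
    have hM0 : (0:ℝ) ≤ (Real.sqrt u)^3 * Real.exp (-(s*u)) := by positivity
    have hFr : (Real.sqrt (u*(2-u)))^3 * Real.exp (s * (1-u))
        = (Real.exp s * (2*Real.sqrt 2)) * (((Real.sqrt u)^3 * Real.exp (-(s*u)))
            * (Real.sqrt (1-u/2))^3) := by
      rw [Real.sqrt_mul hu0', show (2:ℝ)-u = 2*(1-u/2) by ring,
        Real.sqrt_mul (by norm_num : (0:ℝ) ≤ 2),
        show s*(1-u) = s + -(s*u) by ring, Real.exp_add]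
      have h23 : (Real.sqrt 2)^3 = 2*Real.sqrt 2 := by
        rw [pow_succ, Real.sq_sqrt (by norm_num : (0:ℝ) ≤ 2)]
      linear_combination (Real.exp s * Real.exp (-(s*u)) * (Real.sqrt u)^3
        * (Real.sqrt (1-u/2))^3) * h23
    have c32 : u^((3:ℝ)/2) = (Real.sqrt u)^3 := by
      rw [Real.sqrt_eq_rpow, ← Real.rpow_natCast (u ^ ((1:ℝ)/2)) 3, ← Real.rpow_mul hu0']
      norm_num
    have c52 : u^((5:ℝ)/2) = (Real.sqrt u)^3 * u := by
      rw [show (5:ℝ)/2 = 3/2 + 1 by norm_num, Real.rpow_add hup, Real.rpow_one, c32]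
    have c72 : u^((7:ℝ)/2) = (Real.sqrt u)^3 * u^2 := by
      rw [show (7:ℝ)/2 = 3/2 + ((2:ℕ):ℝ) by norm_num, Real.rpow_add hup,
        Real.rpow_natCast, c32]
    have c92 : u^((9:ℝ)/2) = (Real.sqrt u)^3 * u^3 := by
      rw [show (9:ℝ)/2 = 3/2 + ((3:ℕ):ℝ) by norm_num, Real.rpow_add hup,
        Real.rpow_natCast, c32]
    have c112 : u^((11:ℝ)/2) = (Real.sqrt u)^3 * u^4 := by
      rw [show (11:ℝ)/2 = 3/2 + ((4:ℕ):ℝ) by norm_num, Real.rpow_add hup,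
        Real.rpow_natCast, c32]
    have c132 : u^((13:ℝ)/2) = (Real.sqrt u)^3 * u^5 := by
      rw [show (13:ℝ)/2 = 3/2 + ((5:ℕ):ℝ) by norm_num, Real.rpow_add hup,
        Real.rpow_natCast, c32]
    have c152 : u^((15:ℝ)/2) = (Real.sqrt u)^3 * u^6 := by
      rw [show (15:ℝ)/2 = 3/2 + ((6:ℕ):ℝ) by norm_num, Real.rpow_add hup,
        Real.rpow_natCast, c32]
    have hcl : comboL s u = ((Real.sqrt u)^3 * Real.exp (-(s*u)))
        * (1 - 3/4*u + 3/32*u^2 + 1/128*u^3 + 3/2048*u^4 + 3/8192*u^5) := by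
      unfold comboL
      rw [c32, c52, c72, c92, c112, c132]; ring
    have hcu : comboU s u = ((Real.sqrt u)^3 * Real.exp (-(s*u)))
        * (1 - 3/4*u + 3/32*u^2 + 1/128*u^3 + 3/2048*u^4 + 3/8192*u^5 + 7/16384*u^6) := by
      unfold comboU comboL
      rw [c32, c52, c72, c92, c112, c132, c152]; ring
    constructor
    · rw [hFr, hcl]
      apply mul_le_mul_of_nonneg_left _ hX0
      apply mul_le_mul_of_nonneg_left _ hM0
      exact le_trans (le_of_eq (by ring)) hA1
    · rw [hFr, hcu]
      apply mul_le_mul_of_nonneg_left _ hX0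
      apply mul_le_mul_of_nonneg_left _ hM0
      exact le_trans hA2' (le_of_eq (by ring))
  -- integrability of F on Ioc
  have hFc : Continuous (fun u : ℝ => (Real.sqrt (u*(2-u)))^3 * Real.exp (s * (1-u))) := by
    apply Continuous.mul
    · exact (Real.continuous_sqrt.comp (continuous_id.mul (continuous_const.sub continuous_id))).pow 3
    · exact Real.continuous_exp.comp (continuous_const.mul (continuous_const.sub continuous_id))
  have hFint : IntegrableOn (fun u:ℝ => (Real.sqrt (u*(2-u)))^3 * Real.exp (s * (1-u)))
      (Ioc (0:ℝ) 2) := hFc.integrableOn_Ioc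
  -- Step C' : integral comparison over Ioc
  have hIocsub : Ioc (0:ℝ) 2 ⊆ Ioi 0 := Ioc_subset_Ioi_self
  have hlow : (Real.exp s * (2*Real.sqrt 2)) * ∫ u in Ioc (0:ℝ) 2, comboL s u
      ≤ ∫ u in Ioc (0:ℝ) 2, (Real.sqrt (u*(2-u)))^3 * Real.exp (s * (1-u)) := by
    rw [← MeasureTheory.integral_const_mul]
    exact setIntegral_mono_on ((hLint _ hIocsub).const_mul _) hFint measurableSet_Ioc
      (fun u hu => (hpt u hu).1)
  have hupp : (∫ u in Ioc (0:ℝ) 2, (Real.sqrt (u*(2-u)))^3 * Real.exp (s * (1-u)))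
      ≤ (Real.exp s * (2*Real.sqrt 2)) * ∫ u in Ioc (0:ℝ) 2, comboU s u := by
    rw [← MeasureTheory.integral_const_mul]
    exact setIntegral_mono_on hFint ((hUint _ hIocsub).const_mul _) measurableSet_Ioc
      (fun u hu => (hpt u hu).2)
  -- Step D : values over Ioi 0
  have v32 : ∫ u in Ioi (0:ℝ), u^((3:ℝ)/2) * Real.exp (-(s*u))
      = Real.Gamma (5/2) / s^((5:ℝ)/2) := by
    have h := Ival s (5/2) hs0 (by norm_num)
    rwa [show (5:ℝ)/2 - 1 = 3/2 by norm_num] at h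
  have v52 : ∫ u in Ioi (0:ℝ), u^((5:ℝ)/2) * Real.exp (-(s*u))
      = Real.Gamma (7/2) / s^((7:ℝ)/2) := by
    have h := Ival s (7/2) hs0 (by norm_num)
    rwa [show (7:ℝ)/2 - 1 = 5/2 by norm_num] at h
  have v72 : ∫ u in Ioi (0:ℝ), u^((7:ℝ)/2) * Real.exp (-(s*u))
      = Real.Gamma (9/2) / s^((9:ℝ)/2) := by
    have h := Ival s (9/2) hs0 (by norm_num)
    rwa [show (9:ℝ)/2 - 1 = 7/2 by norm_num] at h
  have v92 : ∫ u in Ioi (0:ℝ), u^((9:ℝ)/2) * Real.exp (-(s*u))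
      = Real.Gamma (11/2) / s^((11:ℝ)/2) := by
    have h := Ival s (11/2) hs0 (by norm_num)
    rwa [show (11:ℝ)/2 - 1 = 9/2 by norm_num] at h
  have v112 : ∫ u in Ioi (0:ℝ), u^((11:ℝ)/2) * Real.exp (-(s*u))
      = Real.Gamma (13/2) / s^((13:ℝ)/2) := by
    have h := Ival s (13/2) hs0 (by norm_num)
    rwa [show (13:ℝ)/2 - 1 = 11/2 by norm_num] at h
  have v132 : ∫ u in Ioi (0:ℝ), u^((13:ℝ)/2) * Real.exp (-(s*u))
      = Real.Gamma (15/2) / s^((15:ℝ)/2) := by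
    have h := Ival s (15/2) hs0 (by norm_num)
    rwa [show (15:ℝ)/2 - 1 = 13/2 by norm_num] at h
  have v152 : ∫ u in Ioi (0:ℝ), u^((15:ℝ)/2) * Real.exp (-(s*u))
      = Real.Gamma (17/2) / s^((17:ℝ)/2) := by
    have h := Ival s (17/2) hs0 (by norm_num)
    rwa [show (17:ℝ)/2 - 1 = 15/2 by norm_num] at h
  have R5 : IntegrableOn (fun u:ℝ => 3/2048*(u^((11:ℝ)/2) * Real.exp (-(s*u)))
      + 3/8192*(u^((13:ℝ)/2) * Real.exp (-(s*u)))) (Ioi 0) :=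
    (i112.const_mul _).add (i132.const_mul _)
  have R4 : IntegrableOn (fun u:ℝ => 1/128*(u^((9:ℝ)/2) * Real.exp (-(s*u)))
      + (3/2048*(u^((11:ℝ)/2) * Real.exp (-(s*u)))
      + 3/8192*(u^((13:ℝ)/2) * Real.exp (-(s*u))))) (Ioi 0) :=
    (i92.const_mul _).add R5
  have R3 : IntegrableOn (fun u:ℝ => 3/32*(u^((7:ℝ)/2) * Real.exp (-(s*u)))
      + (1/128*(u^((9:ℝ)/2) * Real.exp (-(s*u)))
      + (3/2048*(u^((11:ℝ)/2) * Real.exp (-(s*u)))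
      + 3/8192*(u^((13:ℝ)/2) * Real.exp (-(s*u)))))) (Ioi 0) :=
    (i72.const_mul _).add R4
  have R2 : IntegrableOn (fun u:ℝ => -(3/4)*(u^((5:ℝ)/2) * Real.exp (-(s*u)))
      + (3/32*(u^((7:ℝ)/2) * Real.exp (-(s*u))) + (1/128*(u^((9:ℝ)/2) * Real.exp (-(s*u)))
      + (3/2048*(u^((11:ℝ)/2) * Real.exp (-(s*u)))
      + 3/8192*(u^((13:ℝ)/2) * Real.exp (-(s*u))))))) (Ioi 0) :=
    (i52.const_mul _).add R3
  have hVL : ∫ u in Ioi (0:ℝ), comboL s u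
      = 1*(Real.Gamma (5/2)/s^((5:ℝ)/2)) + (-(3/4)*(Real.Gamma (7/2)/s^((7:ℝ)/2))
        + (3/32*(Real.Gamma (9/2)/s^((9:ℝ)/2)) + (1/128*(Real.Gamma (11/2)/s^((11:ℝ)/2))
        + (3/2048*(Real.Gamma (13/2)/s^((13:ℝ)/2))
        + 3/8192*(Real.Gamma (15/2)/s^((15:ℝ)/2)))))) := by
    unfold comboL
    rw [integral_add (i32.const_mul 1) R2,
      integral_add (i52.const_mul (-(3/4))) R3,
      integral_add (i72.const_mul (3/32)) R4,
      integral_add (i92.const_mul (1/128)) R5,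
      integral_add (i112.const_mul (3/2048)) (i132.const_mul (3/8192))]
    simp only [MeasureTheory.integral_const_mul]
    rw [v32, v52, v72, v92, v112, v132]
  have hVU : ∫ u in Ioi (0:ℝ), comboU s u
      = (1*(Real.Gamma (5/2)/s^((5:ℝ)/2)) + (-(3/4)*(Real.Gamma (7/2)/s^((7:ℝ)/2))
        + (3/32*(Real.Gamma (9/2)/s^((9:ℝ)/2)) + (1/128*(Real.Gamma (11/2)/s^((11:ℝ)/2))
        + (3/2048*(Real.Gamma (13/2)/s^((13:ℝ)/2))
        + 3/8192*(Real.Gamma (15/2)/s^((15:ℝ)/2)))))))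
        + 7/16384*(Real.Gamma (17/2)/s^((17:ℝ)/2)) := by
    unfold comboU
    rw [integral_add (hLint _ (by exact fun x hx => hx)) (i152.const_mul (7/16384)),
      MeasureTheory.integral_const_mul, hVL, v152]
  -- Step D' : tails
  have hexpint : IntegrableOn (fun u:ℝ => Real.exp (-(3*s/4*u))) (Ioi 2) := by
    have h := exp_neg_integrableOn_Ioi (2:ℝ) (show (0:ℝ) < 3*s/4 by positivity)
    simpa [neg_mul] using h
  have hIoi2sub : Ioi (2:ℝ) ⊆ Ioi 0 := Ioi_subset_Ioi (by norm_num)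
  have htauL : ∫ u in Ioi (2:ℝ), comboL s u
      ≤ 9039/8192 * (4/(3*s) * Real.exp (-(3*s/2))) := by
    have hmono : ∫ u in Ioi (2:ℝ), comboL s u
        ≤ ∫ u in Ioi (2:ℝ), (9039/8192) * Real.exp (-(3*s/4*u)) := by
      apply setIntegral_mono_on (hLint _ hIoi2sub) (hexpint.const_mul _) measurableSet_Ioi
      intro u hu
      have h2u : (2:ℝ) ≤ u := le_of_lt hu
      have T0 := tail_pt s (3/2) u hs (by norm_num) (by norm_num) h2u
      have T2 := tail_pt s (7/2) u hs (by norm_num) (by norm_num) h2u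
      have T3 := tail_pt s (9/2) u hs (by norm_num) (by norm_num) h2u
      have T4 := tail_pt s (11/2) u hs (by norm_num) (by norm_num) h2u
      have T5 := tail_pt s (13/2) u hs (by norm_num) (by norm_num) h2u
      have hu0' : (0:ℝ) ≤ u := by linarith
      have Tneg : (0:ℝ) ≤ u^((5:ℝ)/2) * Real.exp (-(s*u)) := by positivity
      unfold comboL
      linarith
    rw [MeasureTheory.integral_const_mul, tail_int s hs0] at hmono
    exact hmono
  have htauU : -(3/4) * (4/(3*s) * Real.exp (-(3*s/2)))
      ≤ ∫ u in Ioi (2:ℝ), comboU s u := by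
    have hmono : ∫ u in Ioi (2:ℝ), (-(3/4)) * Real.exp (-(3*s/4*u))
        ≤ ∫ u in Ioi (2:ℝ), comboU s u := by
      apply setIntegral_mono_on (hexpint.const_mul _) (hUint _ hIoi2sub) measurableSet_Ioi
      intro u hu
      have h2u : (2:ℝ) ≤ u := le_of_lt hu
      have hu0' : (0:ℝ) ≤ u := by linarith
      have T1 := tail_pt s (5/2) u hs (by norm_num) (by norm_num) h2u
      have P0 : (0:ℝ) ≤ u^((3:ℝ)/2) * Real.exp (-(s*u)) := by positivity
      have P2 : (0:ℝ) ≤ u^((7:ℝ)/2) * Real.exp (-(s*u)) := by positivity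
      have P3 : (0:ℝ) ≤ u^((9:ℝ)/2) * Real.exp (-(s*u)) := by positivity
      have P4 : (0:ℝ) ≤ u^((11:ℝ)/2) * Real.exp (-(s*u)) := by positivity
      have P5 : (0:ℝ) ≤ u^((13:ℝ)/2) * Real.exp (-(s*u)) := by positivity
      have P6 : (0:ℝ) ≤ u^((15:ℝ)/2) * Real.exp (-(s*u)) := by positivity
      unfold comboU comboL
      linarith
    rw [MeasureTheory.integral_const_mul, tail_int s hs0] at hmono
    exact hmono
  -- Step D'' : split
  have hu2 : Ioc (0:ℝ) 2 ∪ Ioi 2 = Ioi 0 := Ioc_union_Ioi_eq_Ioi (by norm_num)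
  have hsplitL : ∫ u in Ioc (0:ℝ) 2, comboL s u
      = (∫ u in Ioi (0:ℝ), comboL s u) - ∫ u in Ioi (2:ℝ), comboL s u := by
    have h := setIntegral_union (Set.Ioc_disjoint_Ioi le_rfl) measurableSet_Ioi
        (hLint _ (by rw [← hu2]; exact subset_union_left))
        (hLint _ (by rw [← hu2]; exact subset_union_right))
    rw [hu2] at h
    linarith
  have hsplitU : ∫ u in Ioc (0:ℝ) 2, comboU s u
      = (∫ u in Ioi (0:ℝ), comboU s u) - ∫ u in Ioi (2:ℝ), comboU s u := by
    have h := setIntegral_union (Set.Ioc_disjoint_Ioi le_rfl) measurableSet_Ioi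
        (hUint _ (by rw [← hu2]; exact subset_union_left))
        (hUint _ (by rw [← hu2]; exact subset_union_right))
    rw [hu2] at h
    linarith
  -- Step E : pass to t = √s
  set tt := Real.sqrt s with htt
  have hts : tt^2 = s := Real.sq_sqrt hs0.le
  have ht0 : 0 < tt := Real.sqrt_pos.mpr hs0
  have hA : 17/10 ≤ Real.sqrt π := sqrt_pi_ge
  have hA2 : (Real.sqrt π)^2 = π := Real.sq_sqrt Real.pi_pos.le
  have h2 : Real.sqrt 2 * Real.sqrt 2 = 2 := Real.mul_self_sqrt (by norm_num)
  have hsqrt2πs : Real.sqrt (2*π*s) = Real.sqrt 2 * Real.sqrt π * tt := by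
    rw [show 2*π*s = 2*(π*s) by ring, Real.sqrt_mul (by norm_num : (0:ℝ) ≤ 2),
      Real.sqrt_mul Real.pi_pos.le]
    ring
  have hKTt : tt^15 * Real.exp (-(3*s/2)) ≤ 7 := KT s hs
  have hE0 : (0:ℝ) ≤ Real.exp (-(3*s/2)) := (Real.exp_pos _).le
  have hpowt : ∀ n : ℕ, s ^ ((n:ℝ)/2) = tt^n := by
    intro n
    rw [show ((n:ℝ))/2 = (1/2)*(n:ℝ) by ring, Real.rpow_mul hs0.le, Real.rpow_natCast,
      ← Real.sqrt_eq_rpow]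
  have e5 : s^((5:ℝ)/2) = tt^5 := by
    rw [show ((5:ℝ)/2) = ((5:ℕ):ℝ)/2 by norm_num, hpowt]
  have e7 : s^((7:ℝ)/2) = tt^7 := by
    rw [show ((7:ℝ)/2) = ((7:ℕ):ℝ)/2 by norm_num, hpowt]
  have e9 : s^((9:ℝ)/2) = tt^9 := by
    rw [show ((9:ℝ)/2) = ((9:ℕ):ℝ)/2 by norm_num, hpowt]
  have e11 : s^((11:ℝ)/2) = tt^11 := by
    rw [show ((11:ℝ)/2) = ((11:ℕ):ℝ)/2 by norm_num, hpowt]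
  have e13 : s^((13:ℝ)/2) = tt^13 := by
    rw [show ((13:ℝ)/2) = ((13:ℕ):ℝ)/2 by norm_num, hpowt]
  have e15 : s^((15:ℝ)/2) = tt^15 := by
    rw [show ((15:ℝ)/2) = ((15:ℕ):ℝ)/2 by norm_num, hpowt]
  have e17 : s^((17:ℝ)/2) = tt^17 := by
    rw [show ((17:ℝ)/2) = ((17:ℕ):ℝ)/2 by norm_num, hpowt]
  have htne : tt ≠ 0 := ht0.ne'
  have hWLbound : Real.sqrt π * (3/4/tt^5 - 45/32/tt^7 + 315/512/tt^9 + 945/4096/tt^11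
        + 31185/131072/tt^13 + 405405/1048576/tt^15)
        - 9039/8192 * (4/(3*s) * Real.exp (-(3*s/2)))
      ≤ ∫ u in Ioc (0:ℝ) 2, comboL s u := by
    rw [hsplitL, hVL, Gam52, Gam72, Gam92, Gam112, Gam132, Gam152,
      e5, e7, e9, e11, e13, e15]
    have heq : 1*((3/4*Real.sqrt π)/tt^5) + (-(3/4)*((15/8*Real.sqrt π)/tt^7)
        + (3/32*((105/16*Real.sqrt π)/tt^9) + (1/128*((945/32*Real.sqrt π)/tt^11)
        + (3/2048*((10395/64*Real.sqrt π)/tt^13)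
        + 3/8192*((135135/128*Real.sqrt π)/tt^15)))))
        = Real.sqrt π * (3/4/tt^5 - 45/32/tt^7 + 315/512/tt^9 + 945/4096/tt^11
        + 31185/131072/tt^13 + 405405/1048576/tt^15) := by
      field_simp
      ring
    rw [heq]
    linarith
  have hWUbound : (∫ u in Ioc (0:ℝ) 2, comboU s u)
      ≤ Real.sqrt π * (3/4/tt^5 - 45/32/tt^7 + 315/512/tt^9 + 945/4096/tt^11
        + 31185/131072/tt^13 + 405405/1048576/tt^15 + 14189175/4194304/tt^17)
        + 3/4 * (4/(3*s) * Real.exp (-(3*s/2))) := by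
    rw [hsplitU, hVU, Gam52, Gam72, Gam92, Gam112, Gam132, Gam152, Gam172,
      e5, e7, e9, e11, e13, e15, e17]
    have heq : (1*((3/4*Real.sqrt π)/tt^5) + (-(3/4)*((15/8*Real.sqrt π)/tt^7)
        + (3/32*((105/16*Real.sqrt π)/tt^9) + (1/128*((945/32*Real.sqrt π)/tt^11)
        + (3/2048*((10395/64*Real.sqrt π)/tt^13)
        + 3/8192*((135135/128*Real.sqrt π)/tt^15))))))
        + 7/16384*((2027025/256*Real.sqrt π)/tt^17)
        = Real.sqrt π * (3/4/tt^5 - 45/32/tt^7 + 315/512/tt^9 + 945/4096/tt^11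
        + 31185/131072/tt^13 + 405405/1048576/tt^15 + 14189175/4194304/tt^17) := by
      field_simp
      ring
    rw [heq]
    linarith
  -- Final assembly
  have hc : (0:ℝ) ≤ s^2/(3*π) := by positivity
  constructor
  · rw [hJ3]
    refine le_trans (final_lower s tt (Real.sqrt π) (Real.exp (-(3*s/2)))
      (∫ u in Ioc (0:ℝ) 2, comboL s u) hts ht0 hA hA2 hE0 hKTt hsqrt2πs h2 hWLbound) ?_
    exact mul_le_mul_of_nonneg_left hlow hc
  · rw [hJ3]
    refine le_trans ?_ (final_upper s tt (Real.sqrt π) (Real.exp (-(3*s/2)))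
      (∫ u in Ioc (0:ℝ) 2, comboU s u) hts ht0 hA hA2 hE0 hKTt hsqrt2πs h2 hWUbound)
    exact mul_le_mul_of_nonneg_left hupp hc
end

section
/- For z with z^4 > 2π^2/3 and z ≥ (π^2(24·122 - 4)/36)^(1/4), the fourth root satisfies z + π^2/(6z^3) - π^4/(24 z^7) + 7π^6/(432 z^11) - 77π^8/(10368 z^15) < (z^4 + 2π^2/3)^(1/4) < z + π^2/(6z^3) - π^4/(24 z^7) + 7π^6/(432 z^11) - 77π^8/(10368 z^15) + 77π^10/(20736 z^19). -/
open Real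

lemma frei_pow_le (a : ℝ) (ha : 0 ≤ a) (ha1 : a ≤ 1) (n : ℕ) : a ^ (n + 1) ≤ a := by
  calc a ^ (n + 1) = a ^ n * a := by ring
  _ ≤ 1 * a := by
      exact mul_le_mul_of_nonneg_right (pow_le_one₀ ha ha1) ha
  _ = a := one_mul a

lemma frei_key1 (a : ℝ) (ha : 0 < a) (ha1 : a ≤ 9/731) :
    (1 + a/6 - a^2/24 + 7*a^3/432 - 77*a^4/10368)^4 < 1 + 2*a/3 := by
  have ha' : a ≤ 1 := le_trans ha1 (by norm_num)
  have hQ : (0:ℝ) < (77/5184) + (-77/186624)*a + (-275/1119744)*a^2 + (1375/5971968)*a^3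
      + (-25025/161243136)*a^4 + (847/60466176)*a^5 + (637/644972544)*a^6
      + (-82075/46438023168)*a^7 + (471625/557256278016)*a^8 + (-1037575/6687075336192)*a^9
      + (3195731/120367356051456)*a^10 + (-35153041/11555266180939776)*a^11 := by
    have h1 := frei_pow_le a ha.le ha' 1
    have h3 := frei_pow_le a ha.le ha' 3
    have h6 := frei_pow_le a ha.le ha' 6
    have h8 := frei_pow_le a ha.le ha' 8
    have h10 := frei_pow_le a ha.le ha' 10
    have p2 : (0:ℝ) ≤ a^3 := by positivity
    have p4 : (0:ℝ) ≤ a^5 := by positivity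
    have p5 : (0:ℝ) ≤ a^6 := by positivity
    have p7 : (0:ℝ) ≤ a^8 := by positivity
    have p9 : (0:ℝ) ≤ a^10 := by positivity
    nlinarith [h1, h3, h6, h8, h10, p2, p4, p5, p7, p9]
  have hprod := mul_pos (pow_pos ha 5) hQ
  nlinarith [hprod]

lemma frei_key2 (a : ℝ) (ha : 0 < a) (ha1 : a ≤ 9/731) :
    1 + 2*a/3 < (1 + a/6 - a^2/24 + 7*a^3/432 - 77*a^4/10368 + 77*a^5/20736)^4 := by
  have ha' : a ≤ 1 := le_trans ha1 (by norm_num)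
  have hQ : (0:ℝ) < (1463/186624) + (-209/559872)*a + (-1045/17915904)*a^2
      + (7315/80621568)*a^3 + (-133133/1934917632)*a^4 + (29393/644972544)*a^5
      + (-267197/46438023168)*a^6 + (10241/34828517376)*a^7 + (972895/2229025112064)*a^8
      + (-19713925/60183678025728)*a^9 + (1732459729/11555266180939776)*a^10
      + (-199504921/5777633090469888)*a^11 + (60718889/7703510787293184)*a^12
      + (-35153041/23110532361879552)*a^13 + (35153041/184884258895036416)*a^14 := by
    have h1 := frei_pow_le a ha.le ha' 1
    have h3 := frei_pow_le a ha.le ha' 3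
    have h5 := frei_pow_le a ha.le ha' 5
    have h8 := frei_pow_le a ha.le ha' 8
    have h10 := frei_pow_le a ha.le ha' 10
    have h12 := frei_pow_le a ha.le ha' 12
    have p3 : (0:ℝ) ≤ a^3 := by positivity
    have p5 : (0:ℝ) ≤ a^5 := by positivity
    have p7 : (0:ℝ) ≤ a^7 := by positivity
    have p8 : (0:ℝ) ≤ a^8 := by positivity
    have p10 : (0:ℝ) ≤ a^10 := by positivity
    have p12 : (0:ℝ) ≤ a^12 := by positivity
    have p14 : (0:ℝ) ≤ a^14 := by positivity
    nlinarith [h1, h3, h5, h8, h10, h12, p3, p5, p7, p8, p10, p12, p14]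
  have hprod := mul_pos (pow_pos ha 6) hQ
  nlinarith [hprod]

theorem fourth_root_expansion_i (z : ℝ) (hz4 : 2 * π^2 / 3 < z^4)
    (hz : (π^2 * (24 * 122 - 4) / 36) ^ ((1:ℝ)/4) ≤ z) :
    z + π^2/(6*z^3) - π^4/(24*z^7) + 7*π^6/(432*z^11) - 77*π^8/(10368*z^15)
      < (z^4 + 2*π^2/3) ^ ((1:ℝ)/4) ∧
    (z^4 + 2*π^2/3) ^ ((1:ℝ)/4)
      < z + π^2/(6*z^3) - π^4/(24*z^7) + 7*π^6/(432*z^11) - 77*π^8/(10368*z^15)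
        + 77*π^10/(20736*z^19) := by
  have hπ : (0:ℝ) < π := pi_pos
  have hC0 : (0:ℝ) < π^2 * (24 * 122 - 4) / 36 := by positivity
  have hz0 : 0 < z := lt_of_lt_of_le (Real.rpow_pos_of_pos hC0 _) hz
  -- z^4 bound
  have hz4' : π^2 * (24 * 122 - 4) / 36 ≤ z^4 := by
    have h1 : ((π^2 * (24 * 122 - 4) / 36) ^ ((1:ℝ)/4)) ^ (4:ℕ) ≤ z ^ (4:ℕ) :=
      pow_le_pow_left₀ (Real.rpow_nonneg hC0.le _) hz 4
    have h2 : ((π^2 * (24 * 122 - 4) / 36) ^ ((1:ℝ)/4)) ^ (4:ℕ)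
        = π^2 * (24 * 122 - 4) / 36 := by
      rw [← Real.rpow_natCast ((π^2 * (24 * 122 - 4) / 36) ^ ((1:ℝ)/4)) 4,
        ← Real.rpow_mul hC0.le]
      norm_num
    rw [h2] at h1
    exact h1
  set a : ℝ := π^2 / z^4 with ha_def
  have hz4pos : (0:ℝ) < z^4 := by positivity
  have ha : 0 < a := by positivity
  have ha1 : a ≤ 9/731 := by
    rw [ha_def, div_le_div_iff₀ hz4pos (by norm_num)]
    nlinarith [hz4']
  -- rewrite expressions
  have hL : z + π^2/(6*z^3) - π^4/(24*z^7) + 7*π^6/(432*z^11) - 77*π^8/(10368*z^15)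
      = z * (1 + a/6 - a^2/24 + 7*a^3/432 - 77*a^4/10368) := by
    rw [ha_def]; field_simp
  have hU : z + π^2/(6*z^3) - π^4/(24*z^7) + 7*π^6/(432*z^11) - 77*π^8/(10368*z^15)
        + 77*π^10/(20736*z^19)
      = z * (1 + a/6 - a^2/24 + 7*a^3/432 - 77*a^4/10368 + 77*a^5/20736) := by
    rw [ha_def]; field_simp
  have hX : z^4 + 2*π^2/3 = z^4 * (1 + 2*a/3) := by
    rw [ha_def]; field_simp
  have ha' : a ≤ 1 := le_trans ha1 (by norm_num)
  have hfpos : (0:ℝ) < 1 + a/6 - a^2/24 + 7*a^3/432 - 77*a^4/10368 := by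
    nlinarith [frei_pow_le a ha.le ha' 1, frei_pow_le a ha.le ha' 3, pow_nonneg ha.le 3]
  have hgpos : (0:ℝ) < 1 + a/6 - a^2/24 + 7*a^3/432 - 77*a^4/10368 + 77*a^5/20736 := by
    nlinarith [hfpos, pow_nonneg ha.le 5]
  have hLpos : 0 < z * (1 + a/6 - a^2/24 + 7*a^3/432 - 77*a^4/10368) :=
    mul_pos hz0 hfpos
  have hUpos : 0 < z * (1 + a/6 - a^2/24 + 7*a^3/432 - 77*a^4/10368 + 77*a^5/20736) :=
    mul_pos hz0 hgpos
  have hXpos : (0:ℝ) < z^4 + 2*π^2/3 := by positivity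
  -- fourth-power inequalities
  have hL4 : (z * (1 + a/6 - a^2/24 + 7*a^3/432 - 77*a^4/10368))^4 < z^4 + 2*π^2/3 := by
    rw [hX, mul_pow]
    exact mul_lt_mul_of_pos_left (frei_key1 a ha ha1) hz4pos
  have hU4 : z^4 + 2*π^2/3
      < (z * (1 + a/6 - a^2/24 + 7*a^3/432 - 77*a^4/10368 + 77*a^5/20736))^4 := by
    rw [hX, mul_pow]
    exact mul_lt_mul_of_pos_left (frei_key2 a ha ha1) hz4pos
  -- convert to rpow
  have hid : ∀ w : ℝ, 0 < w → (w^(4:ℕ)) ^ ((1:ℝ)/4) = w := by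
    intro w hw
    rw [← Real.rpow_natCast w 4, ← Real.rpow_mul hw.le]
    norm_num
  constructor
  · rw [hL]
    calc z * (1 + a/6 - a^2/24 + 7*a^3/432 - 77*a^4/10368)
        = ((z * (1 + a/6 - a^2/24 + 7*a^3/432 - 77*a^4/10368))^(4:ℕ)) ^ ((1:ℝ)/4) :=
          (hid _ hLpos).symm
      _ < (z^4 + 2*π^2/3) ^ ((1:ℝ)/4) :=
          Real.rpow_lt_rpow (by positivity) hL4 (by norm_num)
  · rw [hU]
    calc (z^4 + 2*π^2/3) ^ ((1:ℝ)/4)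
        < ((z * (1 + a/6 - a^2/24 + 7*a^3/432 - 77*a^4/10368 + 77*a^5/20736))^(4:ℕ)) ^ ((1:ℝ)/4) :=
          Real.rpow_lt_rpow hXpos.le hU4 (by norm_num)
      _ = z * (1 + a/6 - a^2/24 + 7*a^3/432 - 77*a^4/10368 + 77*a^5/20736) :=
          hid _ hUpos
end

section
/- For α > 0 and z real, let b360 = 2^260 · 3^165 · 5 · α^(35/2) (524880 + 2123 π^12 α), b361 = −2^264 · 3^166 · 5 · α^18 (1944 + 7π^12 α), b362 = 2^267 · 3^163 · 5 · π^12 · α^(39/2). Then b360 > 0, b361 < 0, b362 > 0, and for α ∈ {7/3, 12/5} and z > 12.65 one has −361·b360 + b361·z^2 + b362·z^4 > 0. -/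
open Real

/-
After dividing by the positive factor `2^260 · 3^163 · 5 · α^(35/2)` and writing `w = z²`,
the polynomial becomes the quadratic
`128 π¹² α² w² − 432 (1944 + 7 π¹² α) √α w − 3249 (524880 + 2123 π¹² α)` in `w`,
whose larger root is `≈ 159.91` for `α = 7/3` and `≈ 157.67` for `α = 12/5`, both below
`12.65² = 160.0225`. Positivity beyond `160.0225` then follows from the sign of the quadratic
and of its derivative at that point, which only needs a six-digit lower bound on `π` and upper
bound on `√α`.
-/

lemma pi_pow_twelve_gt : (924266 : ℝ) < π ^ 12 :=
  lt_trans (by norm_num) (pow_lt_pow_left₀ pi_gt_d6 (by norm_num) (by norm_num))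

lemma quadratic_pos_of_lt {A B C w₀ w : ℝ} (hA : 0 < A) (hB : B ≤ 2 * A * w₀)
    (h₀ : 0 ≤ A * w₀ ^ 2 - B * w₀ - C) (hw : w₀ < w) :
    0 < A * w ^ 2 - B * w - C := by
  have : A * w ^ 2 - B * w - C - (A * w₀ ^ 2 - B * w₀ - C) = (w - w₀) * (A * (w + w₀) - B) := by
    ring
  nlinarith [mul_pos (sub_pos.2 hw) (mul_pos hA (sub_pos.2 hw))]

lemma reduced_quadratic_pos {α w : ℝ} (hα : α = 7 / 3 ∨ α = 12 / 5) (hw : 160.0225 < w) :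
    0 < 128 * π ^ 12 * α ^ 2 * w ^ 2 - 432 * (1944 + 7 * π ^ 12 * α) * √α * w
      - 3249 * (524880 + 2123 * π ^ 12 * α) := by
  refine quadratic_pos_of_lt (by rcases hα with rfl | rfl <;> positivity) ?_ ?_ hw
  all_goals
    have hp := pi_pow_twelve_gt
    rcases hα with rfl | rfl
    · have hs : √(7 / 3 : ℝ) < 1.52753 := (sqrt_lt' (by norm_num)).2 (by norm_num)
      nlinarith [mul_nonneg (sub_nonneg.2 hp.le) (sub_nonneg.2 hs.le)]
    · have hs : √(12 / 5 : ℝ) < 1.5492 := (sqrt_lt' (by norm_num)).2 (by norm_num)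
      nlinarith [mul_nonneg (sub_nonneg.2 hp.le) (sub_nonneg.2 hs.le)]

theorem leading_coefficients_determinantal (α : ℝ) (hα : 0 < α) :
    0 < 2^260 * 3^165 * 5 * α ^ ((35:ℝ)/2) * (524880 + 2123*π^12*α) ∧
    -(2^264) * 3^166 * 5 * α^18 * (1944 + 7*π^12*α) < 0 ∧
    0 < 2^267 * 3^163 * 5 * π^12 * α ^ ((39:ℝ)/2) ∧
    ((α = 7/3 ∨ α = 12/5) → ∀ z : ℝ, 12.65 < z →
      0 < -361 * (2^260 * 3^165 * 5 * α ^ ((35:ℝ)/2) * (524880 + 2123*π^12*α))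
          + (-(2^264) * 3^166 * 5 * α^18 * (1944 + 7*π^12*α)) * z^2
          + (2^267 * 3^163 * 5 * π^12 * α ^ ((39:ℝ)/2)) * z^4) := by
  refine ⟨by positivity, ?_, by positivity, fun hcase z hz => ?_⟩
  · simp only [neg_mul, neg_lt_zero]
    positivity
  have h18 : α ^ 18 = α ^ ((35:ℝ)/2) * √α := by
    rw [sqrt_eq_rpow, ← rpow_add hα, ← rpow_natCast]; norm_num
  have h39 : α ^ ((39:ℝ)/2) = α ^ ((35:ℝ)/2) * α ^ 2 := by
    rw [← rpow_natCast, ← rpow_add hα]; norm_num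
  have hfactor : -361 * (2^260 * 3^165 * 5 * α ^ ((35:ℝ)/2) * (524880 + 2123*π^12*α))
          + (-(2^264) * 3^166 * 5 * α^18 * (1944 + 7*π^12*α)) * z^2
          + (2^267 * 3^163 * 5 * π^12 * α ^ ((39:ℝ)/2)) * z^4
        = 2^260 * 3^163 * 5 * α ^ ((35:ℝ)/2) *
          (128 * π ^ 12 * α ^ 2 * (z ^ 2) ^ 2 - 432 * (1944 + 7 * π ^ 12 * α) * √α * z ^ 2
            - 3249 * (524880 + 2123 * π ^ 12 * α)) := by
    rw [h18, h39, show (2:ℝ) ^ 264 = 2 ^ 260 * 2 ^ 4 by rw [← pow_add],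
      show (2:ℝ) ^ 267 = 2 ^ 260 * 2 ^ 7 by rw [← pow_add]]
    generalize (2:ℝ) ^ 260 = c
    ring
  rw [hfactor]
  exact mul_pos (by positivity) (reduced_quadratic_pos hcase (by nlinarith))
end
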